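/- arXiv:1909.05931 — 3 statements merged into one kernel-verified Lean document; each statement's English description precedes it below -/
import Mathlib

section
/- Let D = [[λ, 1], [0, λ]] be a 2×2 Jordan block. Then the numerical range of D is the closed disk in ℂ of radius 1/2 centered at λ. -/
/-!
For a unit vector `x`, the quadratic form of the Jordan block is `λ + x̄₀ x₁`, and
`|x̄₀ x₁| = |x₀| |x₁| ≤ (|x₀|² + |x₁|²) / 2 = 1 / 2` by AM-GM. Conversely every `w` with
`|w| ≤ 1 / 2` is `x̄₀ x₁` for the unit vector `x = (a, w / a)` with `a > 0` suitably chosen.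
-/

open scoped Matrix
open Complex Real

/-- The numerical range of a square complex matrix. -/
def numRange {N : ℕ} (M : Matrix (Fin N) (Fin N) ℂ) : Set ℂ :=
  {z | ∃ x : EuclideanSpace ℂ (Fin N), ‖x‖ = 1 ∧ star (x : Fin N → ℂ) ⬝ᵥ M.mulVec x = z}

/-- The numerical abscissa of a square complex matrix. -/
noncomputable def numAbs {N : ℕ} (M : Matrix (Fin N) (Fin N) ℂ) : ℝ :=
  sSup {r : ℝ | ∃ x : EuclideanSpace ℂ (Fin N), ‖x‖ = 1 ∧ (star (x : Fin N → ℂ) ⬝ᵥ M.mulVec x).re = r}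

/-- The spectral (operator 2-)norm of a square complex matrix. -/
noncomputable def spec2 {N : ℕ} (M : Matrix (Fin N) (Fin N) ℂ) : ℝ :=
  ‖Matrix.toEuclideanCLM (𝕜 := ℂ) M‖

/-- The squared Frobenius norm of a square complex matrix. -/
noncomputable def frobSq {N : ℕ} (M : Matrix (Fin N) (Fin N) ℂ) : ℝ :=
  ∑ i, ∑ j, ‖M i j‖ ^ 2

lemma EuclideanSpace.norm_sq_fin_two {𝕜 : Type*} [RCLike 𝕜] (x : EuclideanSpace 𝕜 (Fin 2)) :
    ‖x‖ ^ 2 = ‖x 0‖ ^ 2 + ‖x 1‖ ^ 2 := by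
  rw [EuclideanSpace.norm_sq_eq, Fin.sum_univ_two]

lemma star_dotProduct_jordanBlock_mulVec (lam : ℂ) (x : Fin 2 → ℂ) :
    star x ⬝ᵥ !![lam, 1; 0, lam] *ᵥ x
      = lam * (‖x 0‖ ^ 2 + ‖x 1‖ ^ 2 : ℝ) + star (x 0) * x 1 := by
  simp only [dotProduct, Matrix.mulVec, Fin.sum_univ_two, Pi.star_apply, Matrix.of_apply,
    Matrix.cons_val', Matrix.cons_val_zero, Matrix.cons_val_one, Matrix.empty_val',
    Matrix.cons_val_fin_one, Complex.star_def, ofReal_add, ofReal_pow, ← conj_mul']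
  ring

lemma two_mul_norm_mul_norm_le_norm_sq {𝕜 : Type*} [RCLike 𝕜] (x : EuclideanSpace 𝕜 (Fin 2)) :
    2 * (‖x 0‖ * ‖x 1‖) ≤ ‖x‖ ^ 2 := by
  rw [EuclideanSpace.norm_sq_fin_two, ← mul_assoc]
  exact two_mul_le_add_sq _ _

lemma exists_norm_eq_one_star_mul_eq {w : ℂ} (hw : ‖w‖ ≤ 1 / 2) :
    ∃ x : EuclideanSpace ℂ (Fin 2), ‖x‖ = 1 ∧ star (x 0) * x 1 = w := by
  -- `a ^ 2` is the larger root of `A ^ 2 - A + ‖w‖ ^ 2 = 0`, so that `a ^ 2 + ‖w / a‖ ^ 2 = 1`.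
  set s := √(1 - 4 * ‖w‖ ^ 2)
  have hs : s ^ 2 = 1 - 4 * ‖w‖ ^ 2 := Real.sq_sqrt (by nlinarith [norm_nonneg w])
  set a := √((1 + s) / 2)
  have ha : a ^ 2 = (1 + s) / 2 := Real.sq_sqrt (by positivity)
  have ha0 : a ≠ 0 := by positivity
  refine ⟨!₂[(a : ℂ), w / a], ?_, ?_⟩
  · rw [← pow_eq_one_iff_of_nonneg (norm_nonneg _) two_ne_zero, EuclideanSpace.norm_sq_fin_two]
    simp only [Matrix.cons_val_zero, Matrix.cons_val_one, norm_div,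
      Complex.norm_real, Real.norm_eq_abs, sq_abs, div_pow]
    field_simp
    nlinarith
  · simp only [Matrix.cons_val_zero, Matrix.cons_val_one, Complex.star_def,
      conj_ofReal]
    exact mul_div_cancel₀ w (ofReal_ne_zero.mpr ha0)

/-- The numerical range of the 2×2 Jordan block [[λ,1],[0,λ]] is the closed disk
of radius 1/2 centered at λ. -/
theorem stmt6 (lam : ℂ) :
    numRange !![lam, 1; 0, lam] = Metric.closedBall lam (1 / 2) := by
  ext z
  simp only [numRange, Set.mem_ofPred_eq, Metric.mem_closedBall, Complex.dist_eq]
  constructor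
  · rintro ⟨x, hx, rfl⟩
    have hx2 := two_mul_norm_mul_norm_le_norm_sq x
    rw [hx] at hx2
    rw [star_dotProduct_jordanBlock_mulVec, ← EuclideanSpace.norm_sq_fin_two, hx]
    simp only [one_pow, ofReal_one, mul_one, add_sub_cancel_left, norm_mul, norm_star]
    linarith
  · intro hz
    obtain ⟨x, hx, hxz⟩ := exists_norm_eq_one_star_mul_eq hz
    refine ⟨x, hx, ?_⟩
    rw [star_dotProduct_jordanBlock_mulVec, ← EuclideanSpace.norm_sq_fin_two, hx, hxz]
    simp only [one_pow, ofReal_one, mul_one, add_sub_cancel]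
end

section
/- Let M = [[λ₁, a], [0, λ₂]] with λ₁ ≠ λ₂, Re(λ₁) < 0, Re(λ₂) < 0, and a ∈ ℂ. If |a| > 2√(Re(λ₁)Re(λ₂)), then there exists t > 0 with ‖e^{Mt}‖₂ > 1. -/
open scoped Matrix
open Complex Real

/-! A vector `x` with `Re ⟪x, M x⟫ > 0` makes `t ↦ ‖e^{tM} x‖²` increase at `t = 0`, since its
derivative there is `2 Re ⟪x, M x⟫`; so `‖e^{tM}‖₂ > 1` for small `t > 0`. For the triangular `M`,
`Re ⟪x, M x⟫ = Re λ₁ |x₀|² + Re λ₂ |x₁|² + Re (x̄₀ a x₁)`, and `x = (√(-Re λ₂) |a|, √(-Re λ₁) ā)` gives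
`|a|² √(Re λ₁ Re λ₂) (|a| - 2 √(Re λ₁ Re λ₂)) > 0`. -/

open Filter Topology InnerProductSpace

theorem HasDerivAt.exists_lt_of_deriv_pos {f : ℝ → ℝ} {f' x : ℝ} (hf : HasDerivAt f f' x)
    (hf' : 0 < f') : ∃ y, x < y ∧ f x < f y := by
  have hslope : ∀ᶠ y in 𝓝[>] x, 0 < slope f x y :=
    (hasDerivAt_iff_tendsto_slope.mp hf).mono_left (nhdsGT_le_nhdsNE x)
      |>.eventually (eventually_gt_nhds hf')
  obtain ⟨y, hy, hxy⟩ := (hslope.and self_mem_nhdsWithin).exists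
  refine ⟨y, hxy, ?_⟩
  simpa using pos_of_slope_pos (f := fun z => f z - f x) hxy (by simpa [slope] using hy) (by simp)

theorem hasDerivAt_exp_ofReal_smul_apply_zero {E : Type*} [NormedAddCommGroup E]
    [NormedSpace ℂ E] [CompleteSpace E] (A : E →L[ℂ] E) (x : E) :
    HasDerivAt (fun t : ℝ => NormedSpace.exp ((t : ℂ) • A) x) (A x) 0 := by
  have hexp := (hasDerivAt_exp_smul_const A ((0 : ℝ) : ℂ)).scomp 0 ofRealCLM.hasDerivAt
  rw [show ofRealCLM 1 • (NormedSpace.exp (((0 : ℝ) : ℂ) • A) * A) = A by simp] at hexp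
  exact ((ContinuousLinearMap.apply ℂ E x).restrictScalars ℝ).hasFDerivAt.comp_hasDerivAt 0 hexp

theorem exists_one_lt_norm_exp_smul_of_re_inner_pos {E : Type*} [NormedAddCommGroup E]
    [InnerProductSpace ℂ E] [CompleteSpace E] (A : E →L[ℂ] E) {x : E}
    (hx : 0 < RCLike.re ⟪x, A x⟫_ℂ) :
    ∃ t : ℝ, 0 < t ∧ 1 < ‖NormedSpace.exp ((t : ℂ) • A)‖ := by
  let _ := InnerProductSpace.rclikeToReal ℂ E
  have hx0 : 0 < ‖x‖ := norm_pos_iff.mpr (by rintro rfl; simp at hx)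
  obtain ⟨t, ht, hgrow⟩ := (hasDerivAt_exp_ofReal_smul_apply_zero A x).norm_sq
    |>.exists_lt_of_deriv_pos (by simpa [real_inner_eq_re_inner] using hx)
  refine ⟨t, ht, (lt_mul_iff_one_lt_left hx0).mp ?_⟩
  simp only [ofReal_zero, zero_smul, NormedSpace.exp_zero, one_apply_eq_self] at hgrow
  calc ‖x‖ < ‖NormedSpace.exp ((t : ℂ) • A) x‖ :=
        (pow_lt_pow_iff_left₀ (norm_nonneg _) (norm_nonneg _) two_ne_zero).mp hgrow
    _ ≤ ‖NormedSpace.exp ((t : ℂ) • A)‖ * ‖x‖ := (NormedSpace.exp ((t : ℂ) • A)).le_opNorm x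

-- `NormedSpace.map_exp` needs a complete normed algebra; the `L∞` operator norm on matrices is
-- one inducing the product topology in which `exp` is taken.
theorem spec2_exp {N : ℕ} (M : Matrix (Fin N) (Fin N) ℂ) :
    spec2 (NormedSpace.exp M) = ‖NormedSpace.exp (Matrix.toEuclideanCLM (𝕜 := ℂ) M)‖ := by
  let _ : NormedRing (Matrix (Fin N) (Fin N) ℂ) := Matrix.linftyOpNormedRing
  let _ : NormedAlgebra ℂ (Matrix (Fin N) (Fin N) ℂ) := Matrix.linftyOpNormedAlgebra
  let _ : NormedAlgebra ℚ (Matrix (Fin N) (Fin N) ℂ) := Matrix.linftyOpNormedAlgebra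
  exact congrArg norm <| NormedSpace.map_exp (Matrix.toEuclideanCLM (𝕜 := ℂ) (n := Fin N))
    (LinearMap.continuous_of_finiteDimensional
      (Matrix.toEuclideanCLM (𝕜 := ℂ) (n := Fin N)).toAlgEquiv.toLinearMap) M

theorem exists_one_lt_spec2_exp_smul_of_re_inner_pos {N : ℕ} (M : Matrix (Fin N) (Fin N) ℂ)
    {x : EuclideanSpace ℂ (Fin N)}
    (hx : 0 < RCLike.re ⟪x, Matrix.toEuclideanCLM (𝕜 := ℂ) M x⟫_ℂ) :
    ∃ t : ℝ, 0 < t ∧ 1 < spec2 (NormedSpace.exp ((t : ℂ) • M)) := by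
  simpa only [spec2_exp, map_smul] using exists_one_lt_norm_exp_smul_of_re_inner_pos _ hx

theorem re_inner_toEuclideanCLM_upperTriangular (l1 l2 a : ℂ) (x : EuclideanSpace ℂ (Fin 2)) :
    RCLike.re ⟪x, Matrix.toEuclideanCLM (𝕜 := ℂ) !![l1, a; 0, l2] x⟫_ℂ
      = l1.re * ‖x 0‖ ^ 2 + l2.re * ‖x 1‖ ^ 2 + (starRingEnd ℂ (x 0) * a * x 1).re := by
  simp only [PiLp.inner_apply, Matrix.ofLp_toEuclideanCLM, Matrix.mulVec, dotProduct,
    Matrix.of_apply, Matrix.cons_val', Matrix.cons_val_fin_one, Fin.sum_univ_two,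
    Matrix.cons_val_zero, Matrix.cons_val_one, RCLike.inner_apply, zero_mul, zero_add,
    RCLike.re_to_complex, add_re, mul_re, conj_re, add_im, mul_im, conj_im, Complex.sq_norm,
    normSq_apply]
  ring

theorem exists_re_inner_toEuclideanCLM_upperTriangular_pos {l1 l2 a : ℂ} (h1 : l1.re < 0)
    (h2 : l2.re < 0) (ha : 2 * √(l1.re * l2.re) < ‖a‖) :
    ∃ x : EuclideanSpace ℂ (Fin 2),
      0 < RCLike.re ⟪x, Matrix.toEuclideanCLM (𝕜 := ℂ) !![l1, a; 0, l2] x⟫_ℂ := by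
  set p := √(-l2.re)
  set q := √(-l1.re)
  have hp : p ^ 2 = -l2.re := Real.sq_sqrt (by linarith)
  have hq : q ^ 2 = -l1.re := Real.sq_sqrt (by linarith)
  have hpq : p * q = √(l1.re * l2.re) := by
    rw [← Real.sqrt_mul (by linarith), neg_mul_neg, mul_comm]
  have hs : 0 < √(l1.re * l2.re) := Real.sqrt_pos.mpr (mul_pos_of_neg_of_neg h1 h2)
  have hs2 : √(l1.re * l2.re) ^ 2 = l1.re * l2.re :=
    Real.sq_sqrt (mul_pos_of_neg_of_neg h1 h2).le
  refine ⟨!₂[((p * ‖a‖ : ℝ) : ℂ), (q : ℂ) * starRingEnd ℂ a], ?_⟩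
  have hcross : (starRingEnd ℂ ((p * ‖a‖ : ℝ) : ℂ) * a * ((q : ℂ) * starRingEnd ℂ a)).re
      = p * q * ‖a‖ ^ 3 := by
    rw [Complex.conj_ofReal, mul_mul_mul_comm, Complex.mul_conj', ← Complex.ofReal_mul,
      ← Complex.ofReal_pow, ← Complex.ofReal_mul, Complex.ofReal_re]
    ring
  rw [re_inner_toEuclideanCLM_upperTriangular]
  simp only [Matrix.cons_val_zero, Matrix.cons_val_one, hcross, norm_mul, Complex.norm_real,
    Complex.norm_conj, Real.norm_eq_abs, mul_pow, sq_abs, hp, hq, hpq]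
  nlinarith [mul_pos (mul_pos hs (pow_pos (lt_trans (by positivity) ha) 2)) (sub_pos.mpr ha)]

theorem stmt9_general (lam1 lam2 a : ℂ)
    (h1 : lam1.re < 0) (h2 : lam2.re < 0)
    (ha : 2 * Real.sqrt (lam1.re * lam2.re) < ‖a‖) :
    ∃ t : ℝ, 0 < t ∧ 1 < spec2 (NormedSpace.exp ((t : ℂ) • !![lam1, a; 0, lam2])) := by
  obtain ⟨x, hx⟩ := exists_re_inner_toEuclideanCLM_upperTriangular_pos h1 h2 ha
  exact exists_one_lt_spec2_exp_smul_of_re_inner_pos _ hx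

/-- Transient growth of the matrix exponential of M = [[λ₁, a],[0, λ₂]] when
|a| > 2√(Re(λ₁)Re(λ₂)). -/
theorem stmt9 (lam1 lam2 a : ℂ) (hne : lam1 ≠ lam2)
    (h1 : lam1.re < 0) (h2 : lam2.re < 0)
    (ha : 2 * Real.sqrt (lam1.re * lam2.re) < ‖a‖) :
    ∃ t : ℝ, 0 < t ∧ 1 < spec2 (NormedSpace.exp ((t : ℂ) • !![lam1, a; 0, lam2])) :=
  stmt9_general lam1 lam2 a h1 h2 ha
end

section
/- Let J be the M×M Jordan block (M ≥ 2) with eigenvalue λ. The numerical range W(J) is the closed disk { z ∈ ℂ : |z − λ| ≤ cos(π/(M+1)) }. -/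
open scoped Matrix
open Complex Real

/-- The M×M Jordan block with eigenvalue λ. -/
def jordanBlock (M : ℕ) (lam : ℂ) : Matrix (Fin M) (Fin M) ℂ :=
  Matrix.of fun i j => if i = j then lam else if (i : ℕ) + 1 = (j : ℕ) then 1 else 0

/-!
Write `J = λ + S` with `S` the nilpotent shift, so `x* J x = λ‖x‖² + ∑ conj(x_k) x_{k+1}`.
With `θ = π/(M+1)`, the sequence `s_k = sin(kθ)` satisfies `s_{k-1} + s_{k+1} = 2 cos θ · s_k`,
vanishes at `k = 0` and `k = M + 1` and is positive in between: it is a positive eigenvector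
of the path graph on `M` vertices. Substituting `a_k = s_{k+1} b_k` turns
`cos θ ∑ a_k² - ∑ a_k a_{k+1}` into a sum of squares, so `|x* S x| ≤ ∑ |x_k| |x_{k+1}| ≤ cos θ`
for unit `x`, with equality at `a_k = s_{k+1}`. The real vectors interpolating between `e₀`
and `(s_{k+1})` take every value of `∑ a_k a_{k+1}` in `[0, cos θ]`, and the phases
`x_k = e^{ikφ} a_k` rotate this segment onto the whole disk.
-/

open Finset

section ThreeTermRecurrence

variable {c : ℝ} {s : ℕ → ℝ}

/-- Picone's identity for the path graph; the last term is the boundary contribution. -/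
lemma sum_mul_succ_add_sum_sq_eq (hrec : ∀ k, s k + s (k + 2) = 2 * c * s (k + 1))
    (h0 : s 0 = 0) (a : ℕ → ℝ) {m : ℕ} (hs : ∀ k ≤ m, s (k + 1) ≠ 0) :
    ∑ k ∈ range m, a k * a (k + 1) +
        ∑ k ∈ range m,
          (s (k + 2) * a k - s (k + 1) * a (k + 1)) ^ 2 / (2 * (s (k + 1) * s (k + 2))) =
      c * ∑ k ∈ range m, a k ^ 2 + s m / (2 * s (m + 1)) * a m ^ 2 := by
  induction m with
  | zero => simp [h0]
  | succ m ih =>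
    have hp := hs m (by omega)
    have hq := hs (m + 1) le_rfl
    rw [sum_range_succ, sum_range_succ, sum_range_succ, add_add_add_comm,
      ih fun k hk => hs k (by omega)]
    field_simp
    linear_combination (a m ^ 2 * s (m + 2)) * hrec m

lemma sum_mul_succ_add_sum_sq_eq_of_boundary (hrec : ∀ k, s k + s (k + 2) = 2 * c * s (k + 1))
    (h0 : s 0 = 0) {n : ℕ} (hn : s (n + 2) = 0) (hs : ∀ k ≤ n, s (k + 1) ≠ 0)
    (a : ℕ → ℝ) :
    ∑ k ∈ range n, a k * a (k + 1) +
        ∑ k ∈ range n,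
          (s (k + 2) * a k - s (k + 1) * a (k + 1)) ^ 2 / (2 * (s (k + 1) * s (k + 2))) =
      c * ∑ k ∈ range (n + 1), a k ^ 2 := by
  have hboundary : s n / (2 * s (n + 1)) = c := by
    have hrec_n := hrec n
    rw [hn, add_zero] at hrec_n
    field_simp [hs n le_rfl]
    linarith
  rw [sum_mul_succ_add_sum_sq_eq hrec h0 a hs, hboundary, sum_range_succ, mul_add]

lemma sum_mul_succ_le (hrec : ∀ k, s k + s (k + 2) = 2 * c * s (k + 1))
    (h0 : s 0 = 0) {n : ℕ} (hn : s (n + 2) = 0) (hs : ∀ k ≤ n, 0 < s (k + 1))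
    (a : ℕ → ℝ) :
    ∑ k ∈ range n, a k * a (k + 1) ≤ c * ∑ k ∈ range (n + 1), a k ^ 2 := by
  rw [← sum_mul_succ_add_sum_sq_eq_of_boundary hrec h0 hn (fun k hk => (hs k hk).ne') a,
    le_add_iff_nonneg_right]
  refine sum_nonneg fun k hk => ?_
  have hk := mem_range.mp hk
  have := hs k hk.le
  have := hs (k + 1) hk
  positivity

lemma sum_mul_succ_eq (hrec : ∀ k, s k + s (k + 2) = 2 * c * s (k + 1))
    (h0 : s 0 = 0) {n : ℕ} (hn : s (n + 2) = 0) (hs : ∀ k ≤ n, s (k + 1) ≠ 0) :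
    ∑ k ∈ range n, s (k + 1) * s (k + 2) = c * ∑ k ∈ range (n + 1), s (k + 1) ^ 2 := by
  simpa [mul_comm] using sum_mul_succ_add_sum_sq_eq_of_boundary hrec h0 hn hs (fun k => s (k + 1))

end ThreeTermRecurrence

lemma sin_nat_mul_add_sin_nat_mul (θ : ℝ) (k : ℕ) :
    Real.sin (k * θ) + Real.sin ((k + 2 : ℕ) * θ) =
      2 * Real.cos θ * Real.sin ((k + 1 : ℕ) * θ) := by
  have h := Real.sin_add_sin (k * θ) ((k + 2 : ℕ) * θ)
  push_cast at h ⊢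
  rw [h, ← Real.cos_neg]
  ring_nf

lemma sin_nat_mul_pi_div_pos {n k : ℕ} (hk : k ≤ n) :
    0 < Real.sin ((k + 1 : ℕ) * (π / (n + 2))) := by
  apply Real.sin_pos_of_pos_of_lt_pi (by positivity)
  rw [mul_div_assoc', div_lt_iff₀ (by positivity)]
  have : (k + 1 : ℕ) < (n + 2 : ℝ) := by norm_cast; omega
  nlinarith [pi_pos]

lemma sin_nat_mul_pi_div_self (n : ℕ) : Real.sin ((n + 2 : ℕ) * (π / (n + 2))) = 0 := by
  rw [Nat.cast_add, Nat.cast_ofNat, mul_div_cancel₀ _ (by positivity), Real.sin_pi]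

lemma sum_mul_succ_le_cos (n : ℕ) (a : ℕ → ℝ) :
    ∑ k ∈ range n, a k * a (k + 1) ≤
      Real.cos (π / (n + 2)) * ∑ k ∈ range (n + 1), a k ^ 2 :=
  sum_mul_succ_le (sin_nat_mul_add_sin_nat_mul _) (by simp) (sin_nat_mul_pi_div_self n)
    (fun _ hk => sin_nat_mul_pi_div_pos hk) a

lemma sum_sin_mul_sin_eq_cos_mul (n : ℕ) :
    ∑ k ∈ range n,
        Real.sin ((k + 1 : ℕ) * (π / (n + 2))) * Real.sin ((k + 2 : ℕ) * (π / (n + 2))) =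
      Real.cos (π / (n + 2)) *
        ∑ k ∈ range (n + 1), Real.sin ((k + 1 : ℕ) * (π / (n + 2))) ^ 2 :=
  sum_mul_succ_eq (s := fun k => Real.sin (k * (π / (n + 2)))) (sin_nat_mul_add_sin_nat_mul _)
    (by simp) (sin_nat_mul_pi_div_self n) (fun _ hk => (sin_nat_mul_pi_div_pos hk).ne')

lemma exists_sum_sq_eq_one_of_sum_mul_succ_eq {m n : ℕ} {a : ℕ → ℝ} {w : ℝ}
    (ha : 0 < ∑ k ∈ range m, a k ^ 2)
    (hw : ∑ k ∈ range n, a k * a (k + 1) = w * ∑ k ∈ range m, a k ^ 2) :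
    ∃ v : ℕ → ℝ, ∑ k ∈ range m, v k ^ 2 = 1 ∧
      ∑ k ∈ range n, v k * v (k + 1) = w := by
  refine ⟨fun k => a k / √(∑ k ∈ range m, a k ^ 2), ?_, ?_⟩
  · simp_rw [div_pow, sq_sqrt ha.le, ← sum_div, div_self ha.ne']
  · simp_rw [div_mul_div_comm, mul_self_sqrt ha.le, ← sum_div, hw,
      mul_div_cancel_right₀ _ ha.ne']

lemma exists_sum_sq_eq_one_and_sum_mul_succ_eq (n : ℕ) {w : ℝ} (hw0 : 0 ≤ w)
    (hw : w ≤ Real.cos (π / (n + 2))) :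
    ∃ v : ℕ → ℝ, ∑ k ∈ range (n + 1), v k ^ 2 = 1 ∧
      ∑ k ∈ range n, v k * v (k + 1) = w := by
  let u : ℝ → ℕ → ℝ := fun t k => t ^ k * Real.sin ((k + 1 : ℕ) * (π / (n + 2)))
  let Q : (ℕ → ℝ) → ℝ := fun a => ∑ k ∈ range n, a k * a (k + 1)
  let N : (ℕ → ℝ) → ℝ := fun a => ∑ k ∈ range (n + 1), a k ^ 2
  have hN : ∀ t, 0 < N (u t) := by
    intro t
    have hsin := sin_nat_mul_pi_div_pos (n := n) (k := 0) (by omega)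
    calc 0 < u t 0 ^ 2 := by simpa [u] using pow_pos hsin 2
      _ ≤ N (u t) := single_le_sum (f := fun k => u t k ^ 2) (fun _ _ => sq_nonneg _) (by simp)
  have h0 : Q (u 0) - w * N (u 0) ≤ 0 := by
    have hQ : Q (u 0) = 0 := by simp [Q, u]
    nlinarith [hN 0]
  have h1 : 0 ≤ Q (u 1) - w * N (u 1) := by
    have hQ : Q (u 1) = Real.cos (π / (n + 2)) * N (u 1) := by
      simpa [Q, N, u, add_assoc, one_add_one_eq_two] using sum_sin_mul_sin_eq_cos_mul n
    nlinarith [hN 1]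
  have hcont : Continuous fun t => Q (u t) - w * N (u t) := by fun_prop
  obtain ⟨t, -, ht⟩ := intermediate_value_Icc zero_le_one hcont.continuousOn ⟨h0, h1⟩
  exact exists_sum_sq_eq_one_of_sum_mul_succ_eq (hN t) (sub_eq_zero.mp ht)

def natExtend {α : Type*} [Zero α] {M : ℕ} (x : Fin M → α) (k : ℕ) : α :=
  if h : k < M then x ⟨k, h⟩ else 0

@[simp]
lemma natExtend_val {α : Type*} [Zero α] {M : ℕ} (x : Fin M → α) (i : Fin M) :
    natExtend x i = x i := by
  simp [natExtend]

lemma sum_ite_val_eq_natExtend {α : Type*} [AddCommMonoid α] {M : ℕ} (x : Fin M → α)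
    (k : ℕ) :
    ∑ j : Fin M, (if (j : ℕ) = k then x j else 0) = natExtend x k := by
  calc ∑ j : Fin M, (if (j : ℕ) = k then x j else 0)
      = ∑ m ∈ range M, if m = k then natExtend x m else 0 := by
        simp only [← Fin.sum_univ_eq_sum_range, natExtend_val]
    _ = natExtend x k := by
        simp +contextual [sum_ite_eq', natExtend]

lemma sum_norm_natExtend_sq {M : ℕ} (x : EuclideanSpace ℂ (Fin M)) :
    ∑ k ∈ range M, ‖natExtend x k‖ ^ 2 = ‖x‖ ^ 2 := by
  rw [EuclideanSpace.norm_eq, sq_sqrt (by positivity), ← Fin.sum_univ_eq_sum_range]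
  simp

lemma star_dotProduct_self_eq_norm_sq {M : ℕ} (x : EuclideanSpace ℂ (Fin M)) :
    star (x : Fin M → ℂ) ⬝ᵥ x = (‖x‖ : ℂ) ^ 2 := by
  rw [dotProduct_comm, ← EuclideanSpace.inner_eq_star_dotProduct, inner_self_eq_norm_sq_to_K]
  rfl

lemma jordanBlock_mulVec_apply {M : ℕ} (lam : ℂ) (x : Fin M → ℂ) (i : Fin M) :
    (jordanBlock M lam *ᵥ x) i = lam * x i + natExtend x (i + 1) := by
  have hentry : ∀ j, jordanBlock M lam i j * x j =
      (if i = j then lam * x i else 0) + (if (j : ℕ) = i + 1 then x j else 0) := by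
    intro j
    by_cases hij : i = j
    · subst hij; simp [jordanBlock]
    · have : (i : ℕ) ≠ j := Fin.val_ne_of_ne hij
      simp [jordanBlock, hij, eq_comm]
  simp only [Matrix.mulVec, dotProduct, hentry, sum_add_distrib, sum_ite_eq, mem_univ, if_true,
    sum_ite_val_eq_natExtend]

lemma star_dotProduct_jordanBlock_mulVec_s17 (n : ℕ) (lam : ℂ) (x : Fin (n + 1) → ℂ) :
    star x ⬝ᵥ jordanBlock (n + 1) lam *ᵥ x =
      lam * (star x ⬝ᵥ x) + ∑ k ∈ range n, star (natExtend x k) * natExtend x (k + 1) := by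
  simp only [dotProduct, jordanBlock_mulVec_apply, Pi.star_apply, mul_add, sum_add_distrib,
    mul_sum, mul_left_comm lam]
  congr 1
  calc _ = ∑ k ∈ range (n + 1), star (natExtend x k) * natExtend x (k + 1) := by
        simp only [← Fin.sum_univ_eq_sum_range, natExtend_val]
    _ = _ := by simp [sum_range_succ, natExtend]

lemma numRange_jordanBlock_subset_closedBall (n : ℕ) (lam : ℂ) :
    numRange (jordanBlock (n + 1) lam) ⊆ Metric.closedBall lam (Real.cos (π / (n + 2))) := by
  rintro z ⟨x, hx, rfl⟩
  have hsum : ∑ k ∈ range (n + 1), ‖natExtend x k‖ ^ 2 = 1 := by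
    rw [sum_norm_natExtend_sq, hx, one_pow]
  rw [Metric.mem_closedBall, dist_comm, dist_eq_norm, star_dotProduct_jordanBlock_mulVec_s17,
    star_dotProduct_self_eq_norm_sq, hx]
  calc ‖lam - (lam * ((1 : ℝ) : ℂ) ^ 2 +
          ∑ k ∈ range n, star (natExtend x k) * natExtend x (k + 1))‖
      = ‖∑ k ∈ range n, star (natExtend x k) * natExtend x (k + 1)‖ := by simp
    _ ≤ ∑ k ∈ range n, ‖natExtend x k‖ * ‖natExtend x (k + 1)‖ :=
        (norm_sum_le _ _).trans_eq (by simp)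
    _ ≤ Real.cos (π / (n + 2)) := by
        simpa [hsum] using sum_mul_succ_le_cos n fun k => ‖natExtend x k‖

lemma closedBall_subset_numRange_jordanBlock (n : ℕ) (lam : ℂ) :
    Metric.closedBall lam (Real.cos (π / (n + 2))) ⊆ numRange (jordanBlock (n + 1) lam) := by
  intro z hz
  rw [Metric.mem_closedBall, dist_eq_norm] at hz
  obtain ⟨v, hv, hvw⟩ := exists_sum_sq_eq_one_and_sum_mul_succ_eq n (norm_nonneg _) hz
  set e := exp (arg (z - lam) * I)
  have he : star e * e = 1 := by
    rw [RCLike.star_def, RCLike.conj_mul, norm_exp_ofReal_mul_I]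
    simp
  let x : EuclideanSpace ℂ (Fin (n + 1)) := WithLp.toLp 2 fun i => e ^ (i : ℕ) * v i
  have hx : ∀ k ≤ n, natExtend x k = e ^ k * v k := fun k hk => by
    simp [x, natExtend, Nat.lt_succ_of_le hk]
  have hxnorm : ‖x‖ = 1 := by
    rw [← pow_eq_one_iff_of_nonneg (norm_nonneg x) two_ne_zero, ← sum_norm_natExtend_sq, ← hv]
    refine sum_congr rfl fun k hk => ?_
    rw [hx k (Nat.lt_succ_iff.mp (mem_range.mp hk)), norm_mul, norm_pow, norm_exp_ofReal_mul_I]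
    simp
  have hterm : ∀ k ∈ range n,
      star (natExtend x k) * natExtend x (k + 1) = e * (v k * v (k + 1) : ℝ) := by
    intro k hk
    have hk := mem_range.mp hk
    rw [hx k hk.le, hx (k + 1) hk]
    calc star (e ^ k * v k) * (e ^ (k + 1) * v (k + 1))
        = (star e * e) ^ k * e * (v k * v (k + 1) : ℝ) := by
          simp only [star_mul', star_pow, RCLike.star_def, conj_ofReal, ofReal_mul]
          ring
      _ = _ := by rw [he, one_pow, one_mul]
  refine ⟨x, hxnorm, ?_⟩
  rw [star_dotProduct_jordanBlock_mulVec_s17, star_dotProduct_self_eq_norm_sq, hxnorm,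
    sum_congr rfl hterm, ← mul_sum, ← ofReal_sum, hvw, mul_comm e, norm_mul_exp_arg_mul_I]
  simp

theorem stmt17_general (M : ℕ) (lam : ℂ) :
    numRange (jordanBlock M lam) = Metric.closedBall lam (Real.cos (Real.pi / (M + 1))) := by
  cases M with
  | zero =>
    have hempty : numRange (jordanBlock 0 lam) = ∅ :=
      Set.eq_empty_of_forall_notMem fun _ ⟨x, hx, _⟩ => by simp [Subsingleton.elim x 0] at hx
    simp [hempty]
  | succ n =>
    have hθ : π / ((n + 1 : ℕ) + 1) = π / (n + 2) := by push_cast; ring_nf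
    rw [hθ]
    exact (numRange_jordanBlock_subset_closedBall n lam).antisymm
      (closedBall_subset_numRange_jordanBlock n lam)

/-- The numerical range of the M×M Jordan block (M ≥ 2) with eigenvalue λ is the
closed disk of radius cos(π/(M+1)) centered at λ. -/
theorem stmt17 (M : ℕ) (hM : 2 ≤ M) (lam : ℂ) :
    numRange (jordanBlock M lam) = Metric.closedBall lam (Real.cos (Real.pi / (M + 1))) :=
  stmt17_general M lam
end
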